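/- arXiv:2309.11030 — 3 statements merged into one kernel-verified Lean document; each statement's English description precedes it below -/
import Mathlib

section
/- The Poisson commutant of the Borel subalgebra 𝔟 = span{x₃,x₄,x₅,x₆} of 𝔠(2) is Abelian: if p, q ∈ ℝ[x₁,…,x₆] satisfy {p,x₃} = {p,x₄} = {p,x₅} = {p,x₆} = 0 and {q,x₃} = {q,x₄} = {q,x₅} = {q,x₆} = 0, then {p,q} = 0. -/
/-!
Write `a = ∇p`, `b = ∇q`. Since `c_{jk} = 0` for `j, k ∈ {3, 4}`, the terms of `{p, q}` with
`j` or `k` in `{3, 4}` combine into multiples of `{p, x₃}, {p, x₄}, {q, x₃}, {q, x₄}`, leaving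
the restriction of the bracket to the indices `{1, 2, 5, 6}`. The two equations
`{p, x₃} = {p, x₄} = 0` form a linear system for `(a₁, a₂)` with determinant `x₁² + x₂²`;
substituting its solution (and that for `q`) into `(x₁² + x₂²) · {p, q}` makes everything
cancel, and `ℝ[x₁,…,x₆]` is a domain.
-/

open MvPolynomial

/-- Structure-constant polynomials `c j k = {x_{j+1}, x_{k+1}}` of the 2D conformal
algebra `𝔠(2)` (indices `0,…,5` correspond to `x₁,…,x₆`). -/
noncomputable def c2Mat : Matrix (Fin 6) (Fin 6) (MvPolynomial (Fin 6) ℝ) :=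
  !![0,            0,            -X 1, X 0,  2 * X 3,      2 * X 2;
     0,            0,            X 0,  X 1,  -(2 * X 2),   2 * X 3;
     X 1,          -X 0,         0,    0,    X 5,          -X 4;
     -X 0,         -X 1,         0,    0,    X 4,          X 5;
     -(2 * X 3),   2 * X 2,      -X 5, -X 4, 0,            0;
     -(2 * X 2),   -(2 * X 3),   X 4,  -X 5, 0,            0]

/-- The Lie–Poisson bracket of `𝔠(2)` on `ℝ[x₁,…,x₆]`:
`{p,q} = ∑_{j,k} c_{jk} (∂p/∂x_j) (∂q/∂x_k)`. -/
noncomputable def pb (p q : MvPolynomial (Fin 6) ℝ) : MvPolynomial (Fin 6) ℝ :=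
  ∑ j : Fin 6, ∑ k : Fin 6, c2Mat j k * pderiv j p * pderiv k q

/-- The part `∑_{j,k ∈ {1,2,5,6}} c_{jk} (∂p/∂x_j) (∂q/∂x_k)` of the bracket. -/
noncomputable def pbReduced (p q : MvPolynomial (Fin 6) ℝ) : MvPolynomial (Fin 6) ℝ :=
  2 * (X 3 * (pderiv 0 p * pderiv 4 q - pderiv 4 p * pderiv 0 q
        + pderiv 1 p * pderiv 5 q - pderiv 5 p * pderiv 1 q)
    + X 2 * (pderiv 0 p * pderiv 5 q - pderiv 5 p * pderiv 0 q
        - pderiv 1 p * pderiv 4 q + pderiv 4 p * pderiv 1 q))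

lemma pb_X (p : MvPolynomial (Fin 6) ℝ) (k : Fin 6) :
    pb p (X k) = ∑ j, c2Mat j k * pderiv j p := by
  simp [pb, pderiv_X, Pi.single_apply]

lemma pb_X_two (p : MvPolynomial (Fin 6) ℝ) :
    pb p (X 2) = X 0 * pderiv 1 p - X 1 * pderiv 0 p + X 4 * pderiv 5 p - X 5 * pderiv 4 p := by
  simp only [pb_X, Fin.sum_univ_six, c2Mat, Matrix.of_apply, Matrix.cons_val',
    Matrix.cons_val, Matrix.cons_val_fin_one, Matrix.cons_val_zero, Matrix.cons_val_one]
  ring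

lemma pb_X_three (p : MvPolynomial (Fin 6) ℝ) :
    pb p (X 3) = X 0 * pderiv 0 p + X 1 * pderiv 1 p - X 4 * pderiv 4 p - X 5 * pderiv 5 p := by
  simp only [pb_X, Fin.sum_univ_six, c2Mat, Matrix.of_apply, Matrix.cons_val',
    Matrix.cons_val, Matrix.cons_val_fin_one, Matrix.cons_val_zero, Matrix.cons_val_one]
  ring

lemma pb_eq_pbReduced_add (p q : MvPolynomial (Fin 6) ℝ) :
    pb p q = pbReduced p q + pderiv 2 q * pb p (X 2) + pderiv 3 q * pb p (X 3)
      - pderiv 2 p * pb q (X 2) - pderiv 3 p * pb q (X 3) := by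
  rw [pb_X_two, pb_X_two, pb_X_three, pb_X_three]
  simp only [pb, pbReduced, Fin.sum_univ_six, c2Mat, Matrix.of_apply, Matrix.cons_val',
    Matrix.cons_val, Matrix.cons_val_fin_one, Matrix.cons_val_zero, Matrix.cons_val_one]
  ring

lemma sq_add_sq_mul_pderiv_zero {p : MvPolynomial (Fin 6) ℝ}
    (h2 : pb p (X 2) = 0) (h3 : pb p (X 3) = 0) :
    (X 0 ^ 2 + X 1 ^ 2) * pderiv 0 p =
      X 0 * (X 4 * pderiv 4 p + X 5 * pderiv 5 p) + X 1 * (X 4 * pderiv 5 p - X 5 * pderiv 4 p) := by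
  rw [pb_X_two] at h2
  rw [pb_X_three] at h3
  linear_combination X 0 * h3 - X 1 * h2

lemma sq_add_sq_mul_pderiv_one {p : MvPolynomial (Fin 6) ℝ}
    (h2 : pb p (X 2) = 0) (h3 : pb p (X 3) = 0) :
    (X 0 ^ 2 + X 1 ^ 2) * pderiv 1 p =
      X 1 * (X 4 * pderiv 4 p + X 5 * pderiv 5 p) + X 0 * (X 5 * pderiv 4 p - X 4 * pderiv 5 p) := by
  rw [pb_X_two] at h2
  rw [pb_X_three] at h3
  linear_combination X 1 * h3 + X 0 * h2

lemma sq_add_sq_mul_pbReduced_eq_zero {p q : MvPolynomial (Fin 6) ℝ}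
    (hp2 : pb p (X 2) = 0) (hp3 : pb p (X 3) = 0) (hq2 : pb q (X 2) = 0) (hq3 : pb q (X 3) = 0) :
    (X 0 ^ 2 + X 1 ^ 2) * pbReduced p q = 0 := by
  unfold pbReduced
  linear_combination
    2 * (X 3 * pderiv 4 q + X 2 * pderiv 5 q) * sq_add_sq_mul_pderiv_zero hp2 hp3
    + 2 * (X 3 * pderiv 5 q - X 2 * pderiv 4 q) * sq_add_sq_mul_pderiv_one hp2 hp3
    - 2 * (X 3 * pderiv 4 p + X 2 * pderiv 5 p) * sq_add_sq_mul_pderiv_zero hq2 hq3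
    - 2 * (X 3 * pderiv 5 p - X 2 * pderiv 4 p) * sq_add_sq_mul_pderiv_one hq2 hq3

lemma X_zero_sq_add_X_one_sq_ne_zero : (X 0 ^ 2 + X 1 ^ 2 : MvPolynomial (Fin 6) ℝ) ≠ 0 :=
  fun h => by simpa using congrArg (eval fun _ => (1 : ℝ)) h

theorem stmt7_general (p q : MvPolynomial (Fin 6) ℝ)
    (hp3 : pb p (X 2) = 0) (hp4 : pb p (X 3) = 0)
    (hq3 : pb q (X 2) = 0) (hq4 : pb q (X 3) = 0) :
    pb p q = 0 := by
  rw [pb_eq_pbReduced_add, hp3, hp4, hq3, hq4]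
  simpa [X_zero_sq_add_X_one_sq_ne_zero] using sq_add_sq_mul_pbReduced_eq_zero hp3 hp4 hq3 hq4

/-- The Poisson commutant of the Borel subalgebra `𝔟 = span{x₃,x₄,x₅,x₆}` is Abelian. -/
theorem stmt7 (p q : MvPolynomial (Fin 6) ℝ)
    (hp3 : pb p (X 2) = 0) (hp4 : pb p (X 3) = 0)
    (hp5 : pb p (X 4) = 0) (hp6 : pb p (X 5) = 0)
    (hq3 : pb q (X 2) = 0) (hq4 : pb q (X 3) = 0)
    (hq5 : pb q (X 4) = 0) (hq6 : pb q (X 5) = 0) :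
    pb p q = 0 :=
  stmt7_general p q hp3 hp4 hq3 hq4
end

section
/- The Poisson commutant of the su(2) subalgebra of 𝔠(2) spanned by x₃, (x₂+x₆)/2 and (x₁+x₅)/2 contains the quadratic invariant φ₁ = x₁² + x₂² + 2x₃² + 2x₄² + x₅² + x₆², and the resulting symmetry algebra is Abelian: {φ₁, x₃} = {φ₁, x₁ + x₅} = {φ₁, x₂ + x₆} = 0, and the three polynomials φ₁, C₁ = x₃² − x₄² + x₁x₅ + x₂x₆, C₂ = 2x₃x₄ + x₂x₅ − x₁x₆ pairwise Poisson-commute. -/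
/-!
The bracket is a derivation in its first argument, so `{p, q} = ∑ⱼ ∂ⱼp · {xⱼ, q}`; hence `C₁` and `C₂`
are Casimirs of `𝔠(2)` as soon as they commute with every generator `xⱼ`, which settles the three
brackets involving them. For the rest, `A = 2x₃`, `B = x₂ + x₆`, `C = x₁ + x₅` satisfy
`{A, B} = -2C`, `{B, C} = -2A`, `{C, A} = -2B`, so `A² + B² + C²` is the Casimir of this `su(2)`,
and `φ₁ = A² + B² + C² - 2C₁`.
-/

open MvPolynomial

theorem Derivation.map_ofNat {R A M : Type*} [CommSemiring R] [CommSemiring A] [AddCommMonoid M]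
    [Algebra R A] [Module A M] [Module R M] (D : Derivation R A M) (n : ℕ) [n.AtLeastTwo] :
    D ofNat(n) = 0 := by
  simpa using D.map_natCast (OfNat.ofNat n)

theorem c2Mat_antisymm (j k : Fin 6) : c2Mat k j = -c2Mat j k := by
  fin_cases j <;> fin_cases k <;> simp [c2Mat]

section Bracket

variable (p q r : MvPolynomial (Fin 6) ℝ)

theorem pb_swap : pb q p = -pb p q := by
  simp only [pb, ← Finset.sum_neg_distrib]
  rw [Finset.sum_comm]
  refine Finset.sum_congr rfl fun j _ => Finset.sum_congr rfl fun k _ => ?_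
  rw [c2Mat_antisymm]
  ring

theorem pb_self : pb p p = 0 := by
  have h := pb_swap p p
  rwa [eq_neg_iff_add_eq_zero, ← two_mul, mul_eq_zero, or_iff_right two_ne_zero] at h

theorem pb_X_left (j : Fin 6) : pb (X j) q = ∑ k, c2Mat j k * pderiv k q := by
  simp [pb, pderiv_X, Pi.single_apply]

theorem pb_eq_sum_pderiv_mul_pb_X : pb p q = ∑ j, pderiv j p * pb (X j) q := by
  simp only [pb_X_left, Finset.mul_sum]
  unfold pb
  exact Finset.sum_congr rfl fun j _ => Finset.sum_congr rfl fun k _ => by ring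

noncomputable def pbLeft : Derivation ℝ (MvPolynomial (Fin 6) ℝ) (MvPolynomial (Fin 6) ℝ) :=
  ∑ j, pb (X j) q • pderiv j

theorem pbLeft_apply : pbLeft q p = pb p q := by
  rw [pbLeft, ← Derivation.coeFnAddMonoidHom_apply, map_sum, Finset.sum_apply,
    pb_eq_sum_pderiv_mul_pb_X]
  simp [mul_comm]

theorem pb_sub_left : pb (p - q) r = pb p r - pb q r := by
  simp only [← pbLeft_apply, map_sub]

theorem pb_mul_left : pb (p * q) r = p * pb q r + q * pb p r := by
  simp only [← pbLeft_apply, Derivation.leibniz, smul_eq_mul]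

theorem pb_ofNat_left (n : ℕ) [n.AtLeastTwo] : pb ofNat(n) q = 0 := by
  rw [← pbLeft_apply, Derivation.map_ofNat]

variable {q} in
theorem pb_eq_zero_of_forall_pb_X_left (h : ∀ j, pb (X j) q = 0) : pb p q = 0 := by
  simp [pb_eq_sum_pderiv_mul_pb_X p q, h]

end Bracket

theorem pb_add_sq_self_of_cyclic {A B C l : MvPolynomial (Fin 6) ℝ}
    (hAB : pb A B = l * C) (hCA : pb C A = l * B) :
    pb (A ^ 2 + B ^ 2 + C ^ 2) A = 0 := by
  simp only [← pbLeft_apply, map_add, Derivation.leibniz_pow]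
  simp only [pbLeft_apply, pb_self, pb_swap A B, hAB, hCA, smul_eq_mul, nsmul_eq_mul]
  ring

noncomputable def c2Casimir₁ : MvPolynomial (Fin 6) ℝ := X 2 ^ 2 - X 3 ^ 2 + X 0 * X 4 + X 1 * X 5

noncomputable def c2Casimir₂ : MvPolynomial (Fin 6) ℝ := 2 * X 2 * X 3 + X 1 * X 4 - X 0 * X 5

theorem pb_c2Casimir₁ (p : MvPolynomial (Fin 6) ℝ) : pb p c2Casimir₁ = 0 := by
  refine pb_eq_zero_of_forall_pb_X_left p fun j => ?_
  rw [pb_X_left]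
  fin_cases j <;> simp [c2Casimir₁, Fin.sum_univ_six, c2Mat, pderiv_X, Pi.single_apply] <;> ring

theorem pb_c2Casimir₂ (p : MvPolynomial (Fin 6) ℝ) : pb p c2Casimir₂ = 0 := by
  refine pb_eq_zero_of_forall_pb_X_left p fun j => ?_
  rw [pb_X_left]
  fin_cases j <;>
    simp [c2Casimir₂, Fin.sum_univ_six, c2Mat, pderiv_X, Pi.single_apply, Derivation.map_ofNat] <;>
    ring

noncomputable def su2Casimir : MvPolynomial (Fin 6) ℝ :=
  (2 * X 2) ^ 2 + (X 1 + X 5) ^ 2 + (X 0 + X 4) ^ 2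

theorem pb_su2Casimir :
    pb su2Casimir (X 2) = 0 ∧ pb su2Casimir (X 1 + X 5) = 0 ∧ pb su2Casimir (X 0 + X 4) = 0 := by
  have hAB : pb (2 * X 2) (X 1 + X 5) = -2 * (X 0 + X 4) := by
    simp [pb, Fin.sum_univ_six, c2Mat, pderiv_X, Pi.single_apply, Derivation.map_ofNat]; ring
  have hBC : pb (X 1 + X 5) (X 0 + X 4) = -2 * (2 * X 2) := by
    simp [pb, Fin.sum_univ_six, c2Mat, pderiv_X, Pi.single_apply]; ring
  have hCA : pb (X 0 + X 4) (2 * X 2) = -2 * (X 1 + X 5) := by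
    simp [pb, Fin.sum_univ_six, c2Mat, pderiv_X, Pi.single_apply, Derivation.map_ofNat]; ring
  have hA : pb su2Casimir (2 * X 2) = 0 := pb_add_sq_self_of_cyclic hAB hCA
  have hB : pb su2Casimir (X 1 + X 5) = 0 := by
    rw [su2Casimir, add_rotate]
    exact pb_add_sq_self_of_cyclic hBC hAB
  have hC : pb su2Casimir (X 0 + X 4) = 0 := by
    rw [su2Casimir, add_rotate, add_rotate]
    exact pb_add_sq_self_of_cyclic hCA hBC
  refine ⟨?_, hB, hC⟩
  rw [pb_swap, pb_mul_left, pb_ofNat_left] at hA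
  rw [pb_swap, neg_eq_zero]
  simpa using hA

/-- The quadratic invariant `φ₁` of the `su(2)` subalgebra of `𝔠(2)` spanned by
`x₃, (x₂+x₆)/2, (x₁+x₅)/2`, together with the Casimirs `C₁, C₂` of `𝔠(2)`,
pairwise Poisson-commute. -/
theorem stmt16 :
    pb (X 0 ^ 2 + X 1 ^ 2 + 2 * X 2 ^ 2 + 2 * X 3 ^ 2 + X 4 ^ 2 + X 5 ^ 2) (X 2) = 0 ∧
    pb (X 0 ^ 2 + X 1 ^ 2 + 2 * X 2 ^ 2 + 2 * X 3 ^ 2 + X 4 ^ 2 + X 5 ^ 2) (X 0 + X 4) = 0 ∧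
    pb (X 0 ^ 2 + X 1 ^ 2 + 2 * X 2 ^ 2 + 2 * X 3 ^ 2 + X 4 ^ 2 + X 5 ^ 2) (X 1 + X 5) = 0 ∧
    pb (X 0 ^ 2 + X 1 ^ 2 + 2 * X 2 ^ 2 + 2 * X 3 ^ 2 + X 4 ^ 2 + X 5 ^ 2)
      (X 2 ^ 2 - X 3 ^ 2 + X 0 * X 4 + X 1 * X 5) = 0 ∧
    pb (X 0 ^ 2 + X 1 ^ 2 + 2 * X 2 ^ 2 + 2 * X 3 ^ 2 + X 4 ^ 2 + X 5 ^ 2)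
      (2 * X 2 * X 3 + X 1 * X 4 - X 0 * X 5) = 0 ∧
    pb (X 2 ^ 2 - X 3 ^ 2 + X 0 * X 4 + X 1 * X 5)
      (2 * X 2 * X 3 + X 1 * X 4 - X 0 * X 5) = 0 := by
  have hφ₁ : X 0 ^ 2 + X 1 ^ 2 + 2 * X 2 ^ 2 + 2 * X 3 ^ 2 + X 4 ^ 2 + X 5 ^ 2 =
      su2Casimir - 2 * c2Casimir₁ := by
    rw [su2Casimir, c2Casimir₁]; ring
  have hpb_φ₁ (q : MvPolynomial (Fin 6) ℝ) :
      pb (su2Casimir - 2 * c2Casimir₁) q = pb su2Casimir q := by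
    rw [pb_sub_left, pb_mul_left, pb_ofNat_left, pb_swap _ c2Casimir₁, pb_c2Casimir₁]
    ring
  obtain ⟨h₂, h₁₅, h₀₄⟩ := pb_su2Casimir
  simp only [hφ₁, hpb_φ₁]
  exact ⟨h₂, h₀₄, h₁₅, pb_c2Casimir₁ _, pb_c2Casimir₂ _, pb_c2Casimir₂ _⟩
end

section
/- The cubic Poisson algebra from the Casimir of the su(2) subalgebra of 𝔠(2): let K = 4x₃² + (x₁ + x₅)² + (x₂ + x₆)² (four times the su(2) Casimir), and set A₁ = x₁ + x₅, A₂ = x₂ + x₆, A₃ = x₃, A₄ = x₁² + 2x₄² + x₅² − 2x₂x₆. Then {Aⱼ, K} = 0 for j = 1, 2, 3, 4, and the brackets among the generators are {A₁, A₂} = 4A₃, {A₁, A₃} = −A₂, {A₂, A₃} = A₁, {A₁, A₄} = −4A₂A₃, {A₂, A₄} = −4A₁A₃, {A₃, A₄} = 2A₁A₂. -/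
open MvPolynomial

/-- Generators of the cubic Poisson algebra from the Casimir of the `su(2)`
subalgebra of `𝔠(2)`: `A₁ = x₁ + x₅, A₂ = x₂ + x₆, A₃ = x₃,
A₄ = x₁² + 2x₄² + x₅² − 2x₂x₆`. -/
noncomputable def Asu : Fin 4 → MvPolynomial (Fin 6) ℝ :=
  ![X 0 + X 4,
    X 1 + X 5,
    X 2,
    X 0 ^ 2 + 2 * X 3 ^ 2 + X 4 ^ 2 - 2 * X 1 * X 5]

/-! The bracket `∑ c_jk ∂_j p ∂_k q` is a biderivation, antisymmetric whenever `c` is, so it is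
determined by the brackets `{x_j, x_k} = c_jk` of the coordinates; this gives the six relations
among the `Aᵢ` directly. The Casimir property then follows from these relations alone: by the
Leibniz rule `{d, 4A₃² + A₁² + A₂²} = 2(4A₃{d, A₃} + A₁{d, A₁} + A₂{d, A₂})`, which vanishes for
`d = A₁, …, A₄` by the relations and antisymmetry. -/

namespace MvPolynomial

variable {σ R : Type*} [Fintype σ] [CommRing R]

noncomputable def matrixBracket (c : Matrix σ σ (MvPolynomial σ R)) (p q : MvPolynomial σ R) :
    MvPolynomial σ R :=
  ∑ j, ∑ k, c j k * pderiv j p * pderiv k q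

variable (c : Matrix σ σ (MvPolynomial σ R))

theorem matrixBracket_add_left (p q r : MvPolynomial σ R) :
    matrixBracket c (p + q) r = matrixBracket c p r + matrixBracket c q r := by
  simp only [matrixBracket, map_add, ← Finset.sum_add_distrib, mul_add, add_mul]

theorem matrixBracket_add_right (p q r : MvPolynomial σ R) :
    matrixBracket c p (q + r) = matrixBracket c p q + matrixBracket c p r := by
  simp only [matrixBracket, map_add, ← Finset.sum_add_distrib, mul_add]

theorem matrixBracket_sub_right (p q r : MvPolynomial σ R) :
    matrixBracket c p (q - r) = matrixBracket c p q - matrixBracket c p r := by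
  simp only [matrixBracket, map_sub, ← Finset.sum_sub_distrib, mul_sub]

theorem matrixBracket_mul_right (p q r : MvPolynomial σ R) :
    matrixBracket c p (q * r) = q * matrixBracket c p r + r * matrixBracket c p q := by
  simp only [matrixBracket, Derivation.leibniz, smul_eq_mul, Finset.mul_sum,
    ← Finset.sum_add_distrib]
  refine Finset.sum_congr rfl fun j _ ↦ Finset.sum_congr rfl fun k _ ↦ ?_
  ring

theorem matrixBracket_pow_right (p q : MvPolynomial σ R) (n : ℕ) :
    matrixBracket c p (q ^ n) = n * q ^ (n - 1) * matrixBracket c p q := by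
  simp only [matrixBracket, Derivation.leibniz_pow, nsmul_eq_mul, smul_eq_mul, Finset.mul_sum]
  refine Finset.sum_congr rfl fun j _ ↦ Finset.sum_congr rfl fun k _ ↦ ?_
  ring

theorem matrixBracket_ofNat_right (p : MvPolynomial σ R) (n : ℕ) [n.AtLeastTwo] :
    matrixBracket c p (ofNat(n) : MvPolynomial σ R) = 0 := by
  change matrixBracket c p (n : MvPolynomial σ R) = 0
  simp [matrixBracket, Derivation.map_natCast]

theorem matrixBracket_X_X [DecidableEq σ] (j k : σ) :
    matrixBracket c (X j) (X k) = c j k := by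
  simp [matrixBracket, pderiv_X, Pi.single_apply]

theorem matrixBracket_swap (hc : ∀ j k, c k j = -c j k) (p q : MvPolynomial σ R) :
    matrixBracket c q p = -matrixBracket c p q := by
  rw [matrixBracket, Finset.sum_comm]
  simp only [matrixBracket, ← Finset.sum_neg_distrib]
  refine Finset.sum_congr rfl fun j _ ↦ Finset.sum_congr rfl fun k _ ↦ ?_
  rw [hc]
  ring

theorem matrixBracket_self [IsDomain R] [CharZero R] (hc : ∀ j k, c k j = -c j k)
    (p : MvPolynomial σ R) : matrixBracket c p p = 0 :=
  self_eq_neg.mp (matrixBracket_swap c hc p p)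

theorem matrixBracket_su2Casimir (d a b e : MvPolynomial σ R) :
    matrixBracket c d (4 * e ^ 2 + a ^ 2 + b ^ 2) =
      2 * (4 * e * matrixBracket c d e + a * matrixBracket c d a + b * matrixBracket c d b) := by
  simp only [matrixBracket_add_right, matrixBracket_mul_right, matrixBracket_pow_right,
    matrixBracket_ofNat_right]
  push_cast
  ring

theorem matrixBracket_su2Casimir_eq_zero [IsDomain R] [CharZero R] (hc : ∀ j k, c k j = -c j k)
    {a b e d : MvPolynomial σ R} (hab : matrixBracket c a b = 4 * e)
    (hae : matrixBracket c a e = -b) (hbe : matrixBracket c b e = a)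
    (had : matrixBracket c a d = -4 * b * e) (hbd : matrixBracket c b d = -4 * a * e)
    (hed : matrixBracket c e d = 2 * a * b) :
    matrixBracket c a (4 * e ^ 2 + a ^ 2 + b ^ 2) = 0 ∧
    matrixBracket c b (4 * e ^ 2 + a ^ 2 + b ^ 2) = 0 ∧
    matrixBracket c e (4 * e ^ 2 + a ^ 2 + b ^ 2) = 0 ∧
    matrixBracket c d (4 * e ^ 2 + a ^ 2 + b ^ 2) = 0 := by
  have hba := matrixBracket_swap c hc a b
  have hea := matrixBracket_swap c hc a e
  have heb := matrixBracket_swap c hc b e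
  have hda := matrixBracket_swap c hc a d
  have hdb := matrixBracket_swap c hc b d
  have hde := matrixBracket_swap c hc e d
  simp only [matrixBracket_su2Casimir, matrixBracket_self c hc]
  refine ⟨?_, ?_, ?_, ?_⟩
  · rw [hae, hab]; ring
  · rw [hbe, hba, hab]; ring
  · rw [hea, heb, hae, hbe]; ring
  · rw [hda, hdb, hde, had, hbd, hed]; ring

end MvPolynomial

theorem pb_eq_matrixBracket : pb = matrixBracket c2Mat := rfl

theorem pb_Asu_relations :
    pb (Asu 0) (Asu 1) = 4 * Asu 2 ∧
    pb (Asu 0) (Asu 2) = -Asu 1 ∧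
    pb (Asu 1) (Asu 2) = Asu 0 ∧
    pb (Asu 0) (Asu 3) = -4 * Asu 1 * Asu 2 ∧
    pb (Asu 1) (Asu 3) = -4 * Asu 0 * Asu 2 ∧
    pb (Asu 2) (Asu 3) = 2 * Asu 0 * Asu 1 := by
  simp only [pb_eq_matrixBracket, Asu, Matrix.cons_val, matrixBracket_add_left,
    matrixBracket_add_right, matrixBracket_sub_right, matrixBracket_mul_right,
    matrixBracket_pow_right, matrixBracket_ofNat_right, matrixBracket_X_X]
  simp only [c2Mat, Matrix.of_apply, Matrix.cons_val, Matrix.cons_val_zero, true_and]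
  refine ⟨?_, ?_, ?_, ?_, ?_⟩ <;> ring

/-- The cubic Poisson algebra from the `su(2)` Casimir
`K = 4x₃² + (x₁ + x₅)² + (x₂ + x₆)²`. -/
theorem stmt19 :
    (∀ j : Fin 4,
      pb (Asu j) (4 * X 2 ^ 2 + (X 0 + X 4) ^ 2 + (X 1 + X 5) ^ 2) = 0) ∧
    pb (Asu 0) (Asu 1) = 4 * Asu 2 ∧
    pb (Asu 0) (Asu 2) = -Asu 1 ∧
    pb (Asu 1) (Asu 2) = Asu 0 ∧
    pb (Asu 0) (Asu 3) = -4 * Asu 1 * Asu 2 ∧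
    pb (Asu 1) (Asu 3) = -4 * Asu 0 * Asu 2 ∧
    pb (Asu 2) (Asu 3) = 2 * Asu 0 * Asu 1 := by
  obtain ⟨h01, h02, h12, h03, h13, h23⟩ := pb_Asu_relations
  obtain ⟨k0, k1, k2, k3⟩ :=
    matrixBracket_su2Casimir_eq_zero c2Mat c2Mat_antisymm h01 h02 h12 h03 h13 h23
  refine ⟨fun j ↦ ?_, h01, h02, h12, h03, h13, h23⟩
  fin_cases j
  exacts [k0, k1, k2, k3]
end
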